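/- Let Σ̂ be an n×n symmetric positive definite matrix partitioned into blocks Σ̂₁₁ (n₁×n₁), Σ̂₁₂ (n₁×k), Σ̂₂₁ = Σ̂₁₂ᵀ, Σ̂₂₂ (k×k) with n = n₁ + k, and set Σ̃₁₁ = Σ̂₁₁ − Σ̂₁₂Σ̂₂₂⁻¹Σ̂₂₁. Consider matrices H ∈ ℝ^{n×k}, partitioned into H₁ ∈ ℝ^{n₁×k} and H₂ ∈ ℝ^{k×k}, and D = diag(D₁, 0) with D₁ an n₁×n₁ diagonal positive semidefinite matrix, such that HHᵀ + D is positive definite. Among all such (H, D), the minimum of I(Σ̂ ‖ HHᵀ + D) equals I(Σ̃₁₁ ‖ Δ(Σ̃₁₁)); it is attained at any (H, D) with H₂H₂ᵀ = Σ̂₂₂, H₁H₂ᵀ = Σ̂₁₂, and D₁ = Δ(Σ̃₁₁). -/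

import Mathlib

open Matrix

/-- I-divergence between two positive definite matrices. -/
noncomputable def Idiv {ι : Type} [Fintype ι] [DecidableEq ι]
    (S1 S2 : Matrix ι ι ℝ) : ℝ :=
  (1 / 2) * Real.log (S2.det / S1.det) - (Fintype.card ι : ℝ) / 2
    + (1 / 2) * (S2⁻¹ * S1).trace

/-- `Δ(M)`: the diagonal matrix with the same diagonal as `M`. -/
def deltaOp {ι : Type} [Fintype ι] [DecidableEq ι] (M : Matrix ι ι ℝ) :
    Matrix ι ι ℝ :=
  Matrix.diagonal (fun i => M i i)

section AuxLemmas

set_option linter.unusedSectionVars false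
set_option maxHeartbeats 1000000

variable {m n : Type} [Fintype m] [Fintype n] [DecidableEq m] [DecidableEq n]

lemma my_trace_fromBlocks (A : Matrix m m ℝ) (B : Matrix m n ℝ) (C : Matrix n m ℝ)
    (D : Matrix n n ℝ) : (fromBlocks A B C D).trace = A.trace + D.trace := by
  simp [Matrix.trace, Fintype.sum_sum_type, Matrix.diag]

lemma my_posSemidef_diag_nonneg {M : Matrix m m ℝ} (hM : M.PosSemidef) (i : m) : 0 ≤ M i i := by
  have := hM.dotProduct_mulVec_nonneg (Pi.single i 1)
  simpa [dotProduct, mulVec_single, Pi.single_apply] using this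

lemma my_posDef_diag_pos {M : Matrix m m ℝ} (hM : M.PosDef) (i : m) : 0 < M i i := by
  have := hM.dotProduct_mulVec_pos (x := Pi.single i 1) (by simp)
  simpa [dotProduct, mulVec_single, Pi.single_apply] using this

lemma my_trace_nonneg {M : Matrix m m ℝ} (hM : M.PosSemidef) : 0 ≤ M.trace :=
  Finset.sum_nonneg fun i _ => my_posSemidef_diag_nonneg hM i

open scoped MatrixOrder in
lemma my_trace_mul_nonneg {P Q : Matrix m m ℝ} (hP : P.PosSemidef) (hQ : Q.PosSemidef) :
    0 ≤ (P * Q).trace := by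
  have hs := (CFC.sqrt_nonneg P).posSemidef
  have h1 : P * Q = CFC.sqrt P * (CFC.sqrt P * Q) := by
    rw [← Matrix.mul_assoc, CFC.sqrt_mul_sqrt_self P hP.nonneg]
  rw [h1, Matrix.trace_mul_comm, Matrix.mul_assoc]
  have h2 : (CFC.sqrt P * Q * CFC.sqrt P).PosSemidef := by
    have := hQ.mul_mul_conjTranspose_same (CFC.sqrt P)
    rwa [(by exact hs.1 : (CFC.sqrt P)ᴴ = CFC.sqrt P)] at this
  rw [← Matrix.mul_assoc]
  exact my_trace_nonneg h2

lemma my_trace_eq_sum_eigenvalues {A : Matrix m m ℝ} (hA : A.IsHermitian) :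
    A.trace = ∑ i, hA.eigenvalues i := by
  conv_lhs => rw [hA.spectral_theorem, Unitary.conjStarAlgAut_apply]
  rw [Matrix.trace_mul_cycle]
  rw [(Matrix.mem_unitaryGroup_iff').mp (hA.eigenvectorUnitary).2]
  rw [Matrix.one_mul, Matrix.trace_diagonal]
  simp

lemma my_logdet_le {R : Matrix m m ℝ} (hR : R.PosDef) :
    Real.log R.det ≤ R.trace - (Fintype.card m : ℝ) := by
  rw [hR.1.det_eq_prod_eigenvalues, my_trace_eq_sum_eigenvalues hR.1]
  simp only [RCLike.ofReal_real_eq_id, id]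
  rw [Real.log_prod (fun i _ => (hR.eigenvalues_pos i).ne')]
  have : ∀ i ∈ Finset.univ, Real.log (hR.1.eigenvalues i) ≤ hR.1.eigenvalues i - 1 :=
    fun i _ => Real.log_le_sub_one_of_pos (hR.eigenvalues_pos i)
  calc ∑ i, Real.log (hR.1.eigenvalues i) ≤ ∑ i, (hR.1.eigenvalues i - 1) :=
        Finset.sum_le_sum this
    _ = (∑ i, hR.1.eigenvalues i) - (Fintype.card m : ℝ) := by
        rw [Finset.sum_sub_distrib, Finset.sum_const, Fintype.card, nsmul_eq_mul, mul_one]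

lemma my_Idiv_self {S : Matrix m m ℝ} (h : S.PosDef) : Idiv S S = 0 := by
  unfold Idiv
  rw [div_self h.det_pos.ne', Real.log_one,
    Matrix.nonsing_inv_mul _ (isUnit_iff_ne_zero.2 h.det_pos.ne'), Matrix.trace_one]
  ring

open scoped MatrixOrder in
lemma my_Idiv_nonneg {S1 S2 : Matrix m m ℝ} (h1 : S1.PosDef) (h2 : S2.PosDef) :
    0 ≤ Idiv S1 S2 := by
  set s := CFC.sqrt S1 with hs
  have hss : s * s = S1 := CFC.sqrt_mul_sqrt_self S1 h1.posSemidef.nonneg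
  have hsh : sᴴ = s := (CFC.sqrt_nonneg S1).posSemidef.1
  have hdets : s.det ≠ 0 := by
    intro h0
    have : S1.det = 0 := by rw [← hss, Matrix.det_mul, h0, mul_zero]
    exact h1.det_pos.ne' this
  haveI : Invertible s := s.invertibleOfIsUnitDet (isUnit_iff_ne_zero.2 hdets)
  have hR : (s * S2⁻¹ * s).PosDef := by
    refine PosDef.of_dotProduct_mulVec_pos ?_ ?_
    · have := Matrix.isHermitian_mul_mul_conjTranspose s h2.inv.1
      rwa [hsh] at this
    · intro x hx
      have hy : s *ᵥ x ≠ 0 := fun h0 =>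
        hx (Matrix.mulVec_injective_of_invertible s (by simpa using h0))
      have := h2.inv.dotProduct_mulVec_pos hy
      have hrw : star x ⬝ᵥ (s * S2⁻¹ * s) *ᵥ x
          = star (s *ᵥ x) ⬝ᵥ S2⁻¹ *ᵥ (s *ᵥ x) := by
        rw [← Matrix.mulVec_mulVec, ← Matrix.mulVec_mulVec]
        rw [Matrix.dotProduct_mulVec (star x) s, Matrix.star_mulVec, hsh]
      rw [hrw]
      exact this
  have htr : (s * S2⁻¹ * s).trace = (S2⁻¹ * S1).trace := by
    rw [Matrix.trace_mul_cycle, hss, Matrix.trace_mul_comm]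
  have hdet : (s * S2⁻¹ * s).det = S1.det / S2.det := by
    rw [Matrix.det_mul, Matrix.det_mul, Matrix.det_nonsing_inv, Ring.inverse_eq_inv]
    have hds : s.det * s.det = S1.det := by rw [← Matrix.det_mul, hss]
    calc s.det * S2.det⁻¹ * s.det = s.det * s.det * S2.det⁻¹ := by ring
      _ = S1.det / S2.det := by rw [hds, div_eq_mul_inv]
  have key := my_logdet_le hR
  rw [hdet, htr] at key
  have hlog : Real.log (S1.det / S2.det) = - Real.log (S2.det / S1.det) := by
    rw [Real.log_div h1.det_pos.ne' h2.det_pos.ne',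
      Real.log_div h2.det_pos.ne' h1.det_pos.ne']
    ring
  rw [hlog] at key
  unfold Idiv
  linarith

lemma my_posDef_submatrix {M : Matrix m m ℝ} (hM : M.PosDef) (e : n → m)
    (he : Function.Injective e) : (M.submatrix e e).PosDef := by
  refine PosDef.of_dotProduct_mulVec_pos ?_ ?_
  · have h := hM.1
    rw [IsHermitian] at h ⊢
    rw [Matrix.conjTranspose_submatrix, h]
  · intro x hx
    classical
    set y : m → ℝ := fun j => ∑ i, if e i = j then x i else 0 with hy
    have hMy : ∀ j, (M *ᵥ y) j = ∑ i, M j (e i) * x i := by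
      intro j
      simp only [mulVec, dotProduct, hy, Finset.mul_sum, mul_ite, mul_zero]
      rw [Finset.sum_comm]
      refine Finset.sum_congr rfl fun i _ => ?_
      rw [Finset.sum_ite_eq (Finset.univ) (e i) (fun j' => M j j' * x i)]
      simp
    have hq : star y ⬝ᵥ M *ᵥ y = star x ⬝ᵥ (M.submatrix e e) *ᵥ x := by
      simp only [star_trivial, dotProduct, hMy]
      simp only [hy, Finset.sum_mul, ite_mul, zero_mul]
      rw [Finset.sum_comm]
      refine Finset.sum_congr rfl fun i _ => ?_
      rw [Finset.sum_ite_eq (Finset.univ) (e i) (fun j => x i * ∑ i', M j (e i') * x i')]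
      simp [mulVec, dotProduct, submatrix, Finset.mul_sum]
    have hyne : y ≠ 0 := by
      obtain ⟨i0, hi0⟩ := Function.ne_iff.1 hx
      intro h0
      apply hi0
      have : y (e i0) = x i0 := by
        simp only [hy]
        rw [show (fun i => if e i = e i0 then x i else 0)
            = fun i => if i = i0 then x i else 0 by
          funext i; simp [he.eq_iff]]
        rw [Finset.sum_ite_eq' (Finset.univ) i0 (fun i => x i)]
        simp
      rw [h0] at this
      simpa using this.symm
    have := hM.dotProduct_mulVec_pos hyne
    rwa [hq] at this

lemma my_schur_posDef {M : Matrix (m ⊕ n) (m ⊕ n) ℝ} (hM : M.PosDef) :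
    (M.toBlocks₁₁ - M.toBlocks₁₂ * M.toBlocks₂₂⁻¹ * M.toBlocks₂₁).PosDef := by
  set A := M.toBlocks₁₁ with hA
  set B := M.toBlocks₁₂ with hB
  set C := M.toBlocks₂₂ with hC
  have h21 : M.toBlocks₂₁ = Bᴴ := by
    ext i j
    simp only [toBlocks₂₁, toBlocks₁₂, hB, conjTranspose_apply, of_apply]
    exact (hM.1.apply (Sum.inr i) (Sum.inl j)).symm
  have hApd : A.PosDef := my_posDef_submatrix hM Sum.inl Sum.inl_injective
  have hCpd : C.PosDef := my_posDef_submatrix hM Sum.inr Sum.inr_injective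
  haveI : Invertible C := C.invertibleOfIsUnitDet (isUnit_iff_ne_zero.2 hCpd.det_pos.ne')
  have hMblocks : M = fromBlocks A B Bᴴ C := by
    rw [← h21, hA, hB, hC]
    exact (fromBlocks_toBlocks M).symm
  rw [h21]
  refine PosDef.of_dotProduct_mulVec_pos ?_ ?_
  · exact hApd.1.sub (isHermitian_mul_mul_conjTranspose B hCpd.inv.1)
  · intro x hx
    set y : n → ℝ := -((C⁻¹ * Bᴴ) *ᵥ x) with hy
    have key := Matrix.schur_complement_eq₂₂ A B x y hCpd.1
    have hzero : (C⁻¹ * Bᴴ) *ᵥ x + y = 0 := by rw [hy]; ring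
    rw [hzero] at key
    simp only [star_zero, Matrix.zero_vecMul, zero_dotProduct, zero_add] at key
    have hvne : (Sum.elim x y : (m ⊕ n) → ℝ) ≠ 0 := by
      intro h0
      exact hx (funext fun i => congrFun h0 (Sum.inl i))
    have hpos := hM.dotProduct_mulVec_pos hvne
    rw [hMblocks] at hpos
    rw [Matrix.dotProduct_mulVec] at hpos
    rw [key] at hpos
    rwa [Matrix.dotProduct_mulVec]

lemma my_Idiv_diagonal {W : Matrix m m ℝ} (hW : W.PosDef) (d : m → ℝ) (hd : ∀ i, 0 < d i) :
    Idiv W (diagonal d) = (1 / 2) * Real.log ((∏ i, d i) / W.det)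
      - (Fintype.card m : ℝ) / 2 + (1 / 2) * ∑ i, (d i)⁻¹ * W i i := by
  unfold Idiv
  have hinv : (diagonal d)⁻¹ = diagonal (fun i => (d i)⁻¹) := by
    apply Matrix.inv_eq_right_inv
    rw [diagonal_mul_diagonal]
    have he : (fun i => d i * (d i)⁻¹) = fun _ => (1:ℝ) :=
      funext fun i => mul_inv_cancel₀ (hd i).ne'
    rw [he, diagonal_one]
  rw [det_diagonal, hinv]
  have htr : (diagonal (fun i => (d i)⁻¹) * W).trace = ∑ i, (d i)⁻¹ * W i i := by
    simp [Matrix.trace, Matrix.diag, Matrix.diagonal_mul]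
  rw [htr]

lemma my_Idiv_diag_le {W D : Matrix m m ℝ} (hW : W.PosDef) (hDd : D.IsDiag)
    (hD : D.PosDef) : Idiv W (deltaOp W) ≤ Idiv W D := by
  have hDeq : D = diagonal (fun i => D i i) := hDd.diagonal_diag.symm
  have hd : ∀ i, 0 < D i i := fun i => my_posDef_diag_pos hD i
  have hw : ∀ i, 0 < W i i := fun i => my_posDef_diag_pos hW i
  rw [hDeq, deltaOp, my_Idiv_diagonal hW _ hd, my_Idiv_diagonal hW _ hw]
  have hterm : ∀ i ∈ Finset.univ, Real.log (W i i) + ((W i i)⁻¹ * W i i - 1)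
      ≤ Real.log (D i i) + ((D i i)⁻¹ * W i i - 1) := by
    intro i _
    have h1 : Real.log (W i i) - Real.log (D i i) = Real.log (W i i / D i i) :=
      (Real.log_div (hw i).ne' (hd i).ne').symm
    have h2 : Real.log (W i i / D i i) ≤ W i i / D i i - 1 :=
      Real.log_le_sub_one_of_pos (div_pos (hw i) (hd i))
    have h3 : (W i i)⁻¹ * W i i = 1 := inv_mul_cancel₀ (hw i).ne'
    have h4 : (D i i)⁻¹ * W i i = W i i / D i i := by rw [div_eq_mul_inv]; ring
    rw [h3, h4]
    linarith [h2, h1.le]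
  have hsum := Finset.sum_le_sum hterm
  have hlogW : Real.log (∏ i, W i i) = ∑ i, Real.log (W i i) :=
    Real.log_prod (fun i _ => (hw i).ne')
  have hlogD : Real.log (∏ i, D i i) = ∑ i, Real.log (D i i) :=
    Real.log_prod (fun i _ => (hd i).ne')
  have hlogWdet : Real.log ((∏ i, W i i) / W.det)
      = Real.log (∏ i, W i i) - Real.log W.det :=
    Real.log_div (Finset.prod_pos (fun i _ => hw i)).ne' hW.det_pos.ne'
  have hlogDdet : Real.log ((∏ i, D i i) / W.det)
      = Real.log (∏ i, D i i) - Real.log W.det :=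
    Real.log_div (Finset.prod_pos (fun i _ => hd i)).ne' hW.det_pos.ne'
  rw [hlogWdet, hlogDdet, hlogW, hlogD]
  rw [Finset.sum_add_distrib, Finset.sum_add_distrib] at hsum
  have e1 : ∑ i, ((W i i)⁻¹ * W i i - 1) = (∑ i, (W i i)⁻¹ * W i i) - Fintype.card m := by
    rw [Finset.sum_sub_distrib, Finset.sum_const, Fintype.card, nsmul_eq_mul, mul_one]
  have e2 : ∑ i, ((D i i)⁻¹ * W i i - 1) = (∑ i, (D i i)⁻¹ * W i i) - Fintype.card m := by
    rw [Finset.sum_sub_distrib, Finset.sum_const, Fintype.card, nsmul_eq_mul, mul_one]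
  rw [e1, e2] at hsum
  linarith

lemma my_deltaOp_posDef {W : Matrix m m ℝ} (hW : W.PosDef) : (deltaOp W).PosDef := by
  rw [deltaOp, posDef_diagonal_iff]
  exact fun i => my_posDef_diag_pos hW i

lemma my_trace_identity (S Sh : Matrix m m ℝ) (Bh B : Matrix m n ℝ) (Ch C : Matrix n n ℝ)
    (hC : IsUnit C.det) (hCh : IsUnit Ch.det) (hCt : Cᵀ = C) (hCht : Chᵀ = Ch) :
    (S⁻¹ * (Sh + Bh * Ch⁻¹ * Bhᵀ) + -(S⁻¹ * B * C⁻¹) * Bhᵀ).trace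
      + (-(C⁻¹ * Bᵀ * S⁻¹) * Bh + (C⁻¹ + C⁻¹ * Bᵀ * S⁻¹ * B * C⁻¹) * Ch).trace
    = (C⁻¹ * Ch).trace + (S⁻¹ * Sh).trace
      + (S⁻¹ * ((Bh * Ch⁻¹ - B * C⁻¹) * Ch * (Bh * Ch⁻¹ - B * C⁻¹)ᵀ)).trace := by
  haveI := C.invertibleOfIsUnitDet hC
  haveI := Ch.invertibleOfIsUnitDet hCh
  simp only [Matrix.transpose_sub, Matrix.transpose_mul, Matrix.transpose_nonsing_inv,
    hCt, hCht, Matrix.mul_add, Matrix.add_mul, Matrix.mul_sub, Matrix.sub_mul,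
    Matrix.neg_mul, Matrix.mul_neg, Matrix.trace_add, Matrix.trace_sub, Matrix.trace_neg,
    Matrix.mul_assoc, Matrix.inv_mul_cancel_left_of_invertible,
    Matrix.mul_inv_cancel_left_of_invertible]
  have c1 : (C⁻¹ * (Bᵀ * (S⁻¹ * Bh))).trace = (S⁻¹ * (Bh * (C⁻¹ * Bᵀ))).trace := by
    rw [Matrix.trace_mul_comm C⁻¹ (Bᵀ * (S⁻¹ * Bh))]
    simp only [Matrix.mul_assoc]
    rw [Matrix.trace_mul_comm Bᵀ (S⁻¹ * (Bh * C⁻¹))]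
    simp only [Matrix.mul_assoc]
  have c2 : (C⁻¹ * (Bᵀ * (S⁻¹ * (B * (C⁻¹ * Ch))))).trace
      = (S⁻¹ * (B * (C⁻¹ * (Ch * (C⁻¹ * Bᵀ))))).trace := by
    rw [Matrix.trace_mul_comm C⁻¹ (Bᵀ * (S⁻¹ * (B * (C⁻¹ * Ch))))]
    simp only [Matrix.mul_assoc]
    rw [Matrix.trace_mul_comm Bᵀ (S⁻¹ * (B * (C⁻¹ * (Ch * C⁻¹))))]
    simp only [Matrix.mul_assoc]
  rw [c1, c2]
  ring

lemma my_Idiv_blocks (Ah : Matrix m m ℝ) (Bh : Matrix m n ℝ) (Ch : Matrix n n ℝ)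
    (A : Matrix m m ℝ) (B : Matrix m n ℝ) (C : Matrix n n ℝ)
    (hCh : Ch.PosDef) (hSh : (Ah - Bh * Ch⁻¹ * Bhᵀ).PosDef)
    (hC : C.PosDef) (hS : (A - B * C⁻¹ * Bᵀ).PosDef) :
    Idiv (fromBlocks Ah Bh Bhᵀ Ch) (fromBlocks A B Bᵀ C)
      = Idiv Ch C + Idiv (Ah - Bh * Ch⁻¹ * Bhᵀ) (A - B * C⁻¹ * Bᵀ)
        + (1 / 2) * ((A - B * C⁻¹ * Bᵀ)⁻¹ *
            ((Bh * Ch⁻¹ - B * C⁻¹) * Ch * (Bh * Ch⁻¹ - B * C⁻¹)ᵀ)).trace := by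
  set S := A - B * C⁻¹ * Bᵀ with hSdef
  set Sh := Ah - Bh * Ch⁻¹ * Bhᵀ with hShdef
  haveI iC : Invertible C := C.invertibleOfIsUnitDet (isUnit_iff_ne_zero.2 hC.det_pos.ne')
  haveI iCh : Invertible Ch := Ch.invertibleOfIsUnitDet (isUnit_iff_ne_zero.2 hCh.det_pos.ne')
  haveI iS : Invertible S := S.invertibleOfIsUnitDet (isUnit_iff_ne_zero.2 hS.det_pos.ne')
  haveI iSh : Invertible Sh := Sh.invertibleOfIsUnitDet (isUnit_iff_ne_zero.2 hSh.det_pos.ne')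
  have eC : (⅟C : Matrix n n ℝ) = C⁻¹ := invOf_eq_nonsing_inv C
  have eCh : (⅟Ch : Matrix n n ℝ) = Ch⁻¹ := invOf_eq_nonsing_inv Ch
  have eS : A - B * ⅟C * Bᵀ = S := by rw [eC]
  have eSh : Ah - Bh * ⅟Ch * Bhᵀ = Sh := by rw [eCh]
  haveI iS' : Invertible (A - B * ⅟C * Bᵀ) := eS ▸ iS
  haveI iSh' : Invertible (Ah - Bh * ⅟Ch * Bhᵀ) := eSh ▸ iSh
  haveI iM : Invertible (fromBlocks A B Bᵀ C) := fromBlocks₂₂Invertible A B Bᵀ C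
  have hdet : (fromBlocks A B Bᵀ C).det = C.det * S.det := by
    rw [Matrix.det_fromBlocks₂₂, eS]
  have hdeth : (fromBlocks Ah Bh Bhᵀ Ch).det = Ch.det * Sh.det := by
    rw [Matrix.det_fromBlocks₂₂, eSh]
  have hinv : (fromBlocks A B Bᵀ C)⁻¹
      = fromBlocks S⁻¹ (-(S⁻¹ * B * C⁻¹)) (-(C⁻¹ * Bᵀ * S⁻¹))
        (C⁻¹ + C⁻¹ * Bᵀ * S⁻¹ * B * C⁻¹) := by
    rw [← invOf_eq_nonsing_inv, invOf_fromBlocks₂₂_eq]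
    have eS' : (⅟(A - B * ⅟C * Bᵀ) : Matrix m m ℝ) = S⁻¹ := by
      rw [invOf_eq_nonsing_inv, eS]
    rw [eS', eC]
  have htr : ((fromBlocks A B Bᵀ C)⁻¹ * fromBlocks Ah Bh Bhᵀ Ch).trace
      = (C⁻¹ * Ch).trace + (S⁻¹ * Sh).trace
        + (S⁻¹ * ((Bh * Ch⁻¹ - B * C⁻¹) * Ch * (Bh * Ch⁻¹ - B * C⁻¹)ᵀ)).trace := by
    rw [hinv, fromBlocks_multiply, my_trace_fromBlocks]
    have hAh : Ah = Sh + Bh * Ch⁻¹ * Bhᵀ := by rw [hShdef, sub_add_cancel]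
    rw [hAh]
    exact my_trace_identity S Sh Bh B Ch C (isUnit_iff_ne_zero.2 hC.det_pos.ne')
      (isUnit_iff_ne_zero.2 hCh.det_pos.ne') (hC.1 : Cᵀ = C) (hCh.1 : Chᵀ = Ch)
  have hlog : Real.log ((fromBlocks A B Bᵀ C).det / (fromBlocks Ah Bh Bhᵀ Ch).det)
      = Real.log (C.det / Ch.det) + Real.log (S.det / Sh.det) := by
    rw [hdet, hdeth, ← div_mul_div_comm]
    exact Real.log_mul (div_pos hC.det_pos hCh.det_pos).ne'
      (div_pos hS.det_pos hSh.det_pos).ne'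
  unfold Idiv
  rw [hlog, htr, Fintype.card_sum]
  push_cast
  ring

end AuxLemmas
section Helpers
set_option linter.unusedSectionVars false
set_option maxHeartbeats 1000000
variable {m n : Type} [Fintype m] [Fintype n] [DecidableEq m] [DecidableEq n]

lemma my_HHt_blocks (H : Matrix (m ⊕ n) n ℝ) :
    H * Hᵀ = fromBlocks
      (H.submatrix Sum.inl id * (H.submatrix Sum.inl id)ᵀ)
      (H.submatrix Sum.inl id * (H.submatrix Sum.inr id)ᵀ)
      (H.submatrix Sum.inr id * (H.submatrix Sum.inl id)ᵀ)
      (H.submatrix Sum.inr id * (H.submatrix Sum.inr id)ᵀ) := by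
  ext i j
  cases i <;> cases j <;> simp [Matrix.mul_apply, fromBlocks, submatrix]

lemma my_H1H1 (H1 : Matrix m n ℝ) (H2 : Matrix n n ℝ) (h : IsUnit (H2 * H2ᵀ).det) :
    (H1 * H2ᵀ) * (H2 * H2ᵀ)⁻¹ * (H1 * H2ᵀ)ᵀ = H1 * H1ᵀ := by
  have hdet : H2.det ≠ 0 := by
    intro h0
    rw [Matrix.det_mul, h0, zero_mul] at h
    exact h.ne_zero rfl
  haveI : Invertible H2 := H2.invertibleOfIsUnitDet (isUnit_iff_ne_zero.2 hdet)
  haveI : Invertible H2ᵀ := Matrix.invertibleTranspose H2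
  rw [Matrix.transpose_mul, Matrix.transpose_transpose, Matrix.mul_inv_rev]
  simp only [Matrix.mul_assoc, Matrix.mul_inv_cancel_left_of_invertible,
    Matrix.inv_mul_cancel_left_of_invertible]

end Helpers

theorem stmt_17 (n1 k : ℕ)
    (Shat : Matrix (Fin n1 ⊕ Fin k) (Fin n1 ⊕ Fin k) ℝ) (hShat : Shat.PosDef)
    (St11 : Matrix (Fin n1) (Fin n1) ℝ)
    (hSt11 : St11 = Shat.toBlocks₁₁
      - Shat.toBlocks₁₂ * Shat.toBlocks₂₂⁻¹ * Shat.toBlocks₂₁) :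
    (∀ (H : Matrix (Fin n1 ⊕ Fin k) (Fin k) ℝ)
        (D1 : Matrix (Fin n1) (Fin n1) ℝ),
      D1.IsDiag → D1.PosSemidef →
      (H * Hᵀ + fromBlocks D1 0 0 0).PosDef →
      Idiv St11 (deltaOp St11) ≤ Idiv Shat (H * Hᵀ + fromBlocks D1 0 0 0)) ∧
    (∀ (H : Matrix (Fin n1 ⊕ Fin k) (Fin k) ℝ)
        (D1 : Matrix (Fin n1) (Fin n1) ℝ),
      D1.IsDiag → D1.PosSemidef →
      H.submatrix Sum.inr id * (H.submatrix Sum.inr id)ᵀ = Shat.toBlocks₂₂ →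
      H.submatrix Sum.inl id * (H.submatrix Sum.inr id)ᵀ = Shat.toBlocks₁₂ →
      D1 = deltaOp St11 →
      Idiv Shat (H * Hᵀ + fromBlocks D1 0 0 0) = Idiv St11 (deltaOp St11)) := by
  set Ah := Shat.toBlocks₁₁ with hAh
  set Bh := Shat.toBlocks₁₂ with hBh
  set Ch := Shat.toBlocks₂₂ with hCh
  have h21h : Shat.toBlocks₂₁ = Bhᵀ := by
    ext i j
    simp only [toBlocks₂₁, toBlocks₁₂, hBh, transpose_apply, of_apply]
    exact (hShat.1.apply (Sum.inr i) (Sum.inl j)).symm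
  have hShatB : Shat = fromBlocks Ah Bh Bhᵀ Ch := by
    rw [← h21h, hAh, hBh, hCh]
    exact (fromBlocks_toBlocks Shat).symm
  have hChpd : Ch.PosDef := my_posDef_submatrix hShat Sum.inr Sum.inr_injective
  have hSt11pd : St11.PosDef := by rw [hSt11]; exact my_schur_posDef hShat
  have hStEq : St11 = Ah - Bh * Ch⁻¹ * Bhᵀ := by rw [hSt11, h21h]
  constructor
  · intro H D1 hdiag _hpsd hpd
    set H1 := H.submatrix Sum.inl id with hH1
    set H2 := H.submatrix Sum.inr id with hH2
    have hSigma : H * Hᵀ + fromBlocks D1 0 0 0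
        = fromBlocks (H1 * H1ᵀ + D1) (H1 * H2ᵀ) ((H1 * H2ᵀ)ᵀ) (H2 * H2ᵀ) := by
      rw [my_HHt_blocks H, fromBlocks_add]
      simp [Matrix.transpose_mul, add_comm, ← Matrix.transpose_submatrix]
      exact ⟨rfl, rfl, rfl, rfl⟩
    have hpd' : (fromBlocks (H1 * H1ᵀ + D1) (H1 * H2ᵀ) ((H1 * H2ᵀ)ᵀ) (H2 * H2ᵀ)).PosDef :=
      hSigma ▸ hpd
    have hCpd : (H2 * H2ᵀ).PosDef := by
      have h := my_posDef_submatrix hpd' Sum.inr Sum.inr_injective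
      have he : (fromBlocks (H1 * H1ᵀ + D1) (H1 * H2ᵀ) ((H1 * H2ᵀ)ᵀ)
          (H2 * H2ᵀ)).submatrix Sum.inr Sum.inr = H2 * H2ᵀ := by
        ext i j; rfl
      rwa [he] at h
    have hBCB := my_H1H1 H1 H2 (isUnit_iff_ne_zero.2 hCpd.det_pos.ne')
    have hSchur : H1 * H1ᵀ + D1 - (H1 * H2ᵀ) * (H2 * H2ᵀ)⁻¹ * (H1 * H2ᵀ)ᵀ = D1 := by
      rw [hBCB, add_sub_cancel_left]
    have hD1pd : D1.PosDef := by
      have h := my_schur_posDef hpd'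
      simp only [Matrix.toBlocks_fromBlocks₁₁, Matrix.toBlocks_fromBlocks₁₂,
        Matrix.toBlocks_fromBlocks₂₁, Matrix.toBlocks_fromBlocks₂₂] at h
      rwa [hSchur] at h
    have hSh' : (Ah - Bh * Ch⁻¹ * Bhᵀ).PosDef := hStEq ▸ hSt11pd
    have hS' : (H1 * H1ᵀ + D1 - (H1 * H2ᵀ) * (H2 * H2ᵀ)⁻¹ * (H1 * H2ᵀ)ᵀ).PosDef := by
      rwa [hSchur]
    have key := my_Idiv_blocks Ah Bh Ch (H1 * H1ᵀ + D1) (H1 * H2ᵀ) (H2 * H2ᵀ)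
      hChpd hSh' hCpd hS'
    rw [← hSigma, ← hShatB, hSchur, ← hStEq] at key
    have hn1 : 0 ≤ Idiv Ch (H2 * H2ᵀ) := my_Idiv_nonneg hChpd hCpd
    have hn2 : 0 ≤ (D1⁻¹ * ((Bh * Ch⁻¹ - H1 * H2ᵀ * (H2 * H2ᵀ)⁻¹) * Ch
        * (Bh * Ch⁻¹ - H1 * H2ᵀ * (H2 * H2ᵀ)⁻¹)ᵀ)).trace := by
      apply my_trace_mul_nonneg hD1pd.inv.posSemidef
      exact hChpd.posSemidef.mul_mul_conjTranspose_same (Bh * Ch⁻¹ - H1 * H2ᵀ * (H2 * H2ᵀ)⁻¹)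
    have hle : Idiv St11 (deltaOp St11) ≤ Idiv St11 D1 :=
      my_Idiv_diag_le hSt11pd hdiag hD1pd
    rw [key]
    linarith
  · intro H D1 hdiag _hpsd h22 h12 hD1
    set H1 := H.submatrix Sum.inl id with hH1
    set H2 := H.submatrix Sum.inr id with hH2
    have hSigma : H * Hᵀ + fromBlocks D1 0 0 0
        = fromBlocks (H1 * H1ᵀ + D1) (H1 * H2ᵀ) ((H1 * H2ᵀ)ᵀ) (H2 * H2ᵀ) := by
      rw [my_HHt_blocks H, fromBlocks_add]
      simp [Matrix.transpose_mul, add_comm, ← Matrix.transpose_submatrix]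
      exact ⟨rfl, rfl, rfl, rfl⟩
    have hD1pd : D1.PosDef := hD1 ▸ my_deltaOp_posDef hSt11pd
    have hBCB := my_H1H1 H1 H2 (by rw [h22]; exact isUnit_iff_ne_zero.2 hChpd.det_pos.ne')
    have hBB : Bh * Ch⁻¹ * Bhᵀ = H1 * H1ᵀ := by
      rw [← h12, ← h22]; exact hBCB
    have hSchur : H1 * H1ᵀ + D1 - Bh * Ch⁻¹ * Bhᵀ = D1 := by
      rw [hBB, add_sub_cancel_left]
    have hSh' : (Ah - Bh * Ch⁻¹ * Bhᵀ).PosDef := hStEq ▸ hSt11pd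
    have hS' : (H1 * H1ᵀ + D1 - Bh * Ch⁻¹ * Bhᵀ).PosDef := by rwa [hSchur]
    have key := my_Idiv_blocks Ah Bh Ch (H1 * H1ᵀ + D1) Bh Ch hChpd hSh' hChpd hS'
    have hSigma' : H * Hᵀ + fromBlocks D1 0 0 0 = fromBlocks (H1 * H1ᵀ + D1) Bh Bhᵀ Ch := by
      rw [hSigma, h12, h22]
    rw [← hSigma', ← hShatB, hSchur, ← hStEq, hD1, sub_self] at key
    rw [hD1, key, my_Idiv_self hChpd]
    simp [Matrix.zero_mul, Matrix.mul_zero]
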